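/- Let 1 ≤ N ≤ M be integers, let Φ₁,…,Φ_K (functions on [-T,T]) be orthonormal in L²(-T,T) with (Φ_j, Φ_k)_M = σ_j² δ_{jk}, σ_j > 0, and let ε > 0 be such that {j : σ_j > ε} is nonempty. Define H_ε(f) = Σ_{j : σ_j > ε} σ_j^{−2} (f, Φ_j)_M Φ_j. Then the condition number of the truncated-SVD equispaced Fourier extension equals C₁, i.e. sup{ ‖H_ε(f)‖ : f bounded on [-1,1], ‖f‖_M = 1 } = C₁, where C₁ = sup{ ‖φ‖ / ‖φ‖_M : φ ≠ 0, φ ∈ span{Φ_j : σ_j > ε} }. -/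

import Mathlib

open MeasureTheory

/-- The equispaced node `x_n = n/M`, indexed by `k ∈ {0,…,2M}` with `n = k - M`. -/
noncomputable def equiNode (M : ℕ) (k : Fin (2 * M + 1)) : ℝ :=
  (((k : ℕ) : ℝ) - (M : ℝ)) / (M : ℝ)

/-- The discrete bilinear form `(g,h)_M = (M+1/2)⁻¹ Σ_{|n|≤M} g(n/M) conj(h(n/M))`. -/
noncomputable def equiInner (M : ℕ) (g h : ℝ → ℂ) : ℂ :=
  (((M : ℝ) + 1 / 2)⁻¹ : ℝ) * ∑ k : Fin (2 * M + 1),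
    g (equiNode M k) * (starRingEnd ℂ) (h (equiNode M k))

/-- The discrete seminorm `‖g‖_M² = (M+1/2)⁻¹ Σ_{|n|≤M} |g(n/M)|²`. -/
noncomputable def equiNormSq (M : ℕ) (g : ℝ → ℂ) : ℝ :=
  ((M : ℝ) + 1 / 2)⁻¹ * ∑ k : Fin (2 * M + 1), ‖g (equiNode M k)‖ ^ 2

/-- `g` is bounded on `[-1,1]`. -/
def BddOn11 (g : ℝ → ℂ) : Prop := ∃ B : ℝ, ∀ x ∈ Set.Icc (-1 : ℝ) 1, ‖g x‖ ≤ B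

/-!
Sampling at the nodes turns `(·,·)_M` into a Euclidean inner product in which the
`σ_j⁻¹ Φ_j` are orthonormal. In these coordinates `H_ε` is the orthogonal projection onto
`span {Φ_j | ε < σ_j}`, so Bessel's inequality gives `‖H_ε f‖_M ≤ ‖f‖_M = 1`, hence
`‖H_ε f‖ ≤ C₁ ‖H_ε f‖_M ≤ C₁`. Conversely, `H_ε f` depends only on the node values of `f` and
`H_ε` fixes every `φ` in that span, so `φ / ‖φ‖_M`, cut off away from the nodes to make it
bounded, attains the ratio `‖φ‖ / ‖φ‖_M`.
-/

open scoped InnerProductSpace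

section Orthonormal

variable {𝕜 E ι : Type*} [RCLike 𝕜] [NormedAddCommGroup E] [InnerProductSpace 𝕜 E] {v : ι → E}

theorem Orthonormal.norm_sum_smul_sq (hv : Orthonormal 𝕜 v) (l : ι → 𝕜) (s : Finset ι) :
    ‖∑ i ∈ s, l i • v i‖ ^ 2 = ∑ i ∈ s, ‖l i‖ ^ 2 := by
  have : ((‖∑ i ∈ s, l i • v i‖ ^ 2 : ℝ) : 𝕜) = ((∑ i ∈ s, ‖l i‖ ^ 2 : ℝ) : 𝕜) := by
    push_cast
    rw [← inner_self_eq_norm_sq_to_K, hv.inner_sum]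
    exact Finset.sum_congr rfl fun i _ => RCLike.conj_mul (l i)
  exact_mod_cast this

theorem Orthonormal.norm_sum_inner_smul_le (hv : Orthonormal 𝕜 v) (s : Finset ι) (x : E) :
    ‖∑ i ∈ s, ⟪v i, x⟫_𝕜 • v i‖ ^ 2 ≤ ‖x‖ ^ 2 :=
  hv.norm_sum_smul_sq _ s ▸ hv.sum_inner_products_le x

end Orthonormal

/-- The samples at the nodes, weighted so that `(·,·)_M` becomes a Euclidean inner product. -/
noncomputable def nodeVec (M : ℕ) (g : ℝ → ℂ) : EuclideanSpace ℂ (Fin (2 * M + 1)) :=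
  WithLp.toLp 2 fun k => (√((M : ℝ) + 1 / 2)⁻¹ : ℂ) * g (equiNode M k)

section Sampling

variable (M : ℕ)

lemma equiInner_eq_inner_nodeVec (g h : ℝ → ℂ) :
    equiInner M g h = ⟪nodeVec M h, nodeVec M g⟫_ℂ := by
  have hw : ((√((M : ℝ) + 1 / 2)⁻¹ : ℝ) : ℂ) * (√((M : ℝ) + 1 / 2)⁻¹ : ℝ)
      = (((M : ℝ) + 1 / 2)⁻¹ : ℝ) := by
    exact_mod_cast Real.mul_self_sqrt (by positivity)
  simp only [equiInner, nodeVec, EuclideanSpace.inner_eq_star_dotProduct, dotProduct,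
    Finset.mul_sum, Pi.star_apply, RCLike.star_def, map_mul, Complex.conj_ofReal]
  refine Finset.sum_congr rfl fun k _ => ?_
  rw [← hw]
  ring

lemma equiNormSq_eq_norm_nodeVec_sq (g : ℝ → ℂ) : equiNormSq M g = ‖nodeVec M g‖ ^ 2 := by
  have h : ((equiNormSq M g : ℝ) : ℂ) = ⟪nodeVec M g, nodeVec M g⟫_ℂ := by
    rw [← equiInner_eq_inner_nodeVec]
    simp only [equiInner, equiNormSq, Complex.mul_conj, Complex.normSq_eq_norm_sq,
      Complex.ofReal_mul, Complex.ofReal_sum, Complex.ofReal_pow]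
  rw [← inner_self_eq_norm_sq (𝕜 := ℂ), ← h]
  exact (Complex.ofReal_re _).symm

lemma nodeVec_sum {ι : Type*} (s : Finset ι) (c : ι → ℂ) (Φ : ι → ℝ → ℂ) :
    nodeVec M (fun x => ∑ j ∈ s, c j * Φ j x) = ∑ j ∈ s, c j • nodeVec M (Φ j) := by
  ext k
  simp only [nodeVec, WithLp.ofLp_sum, WithLp.ofLp_smul, Finset.sum_apply, Pi.smul_apply,
    smul_eq_mul, Finset.mul_sum]
  exact Finset.sum_congr rfl fun j _ => by ring

lemma nodeVec_indicator_range_equiNode (g : ℝ → ℂ) :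
    nodeVec M ((Set.range (equiNode M)).indicator g) = nodeVec M g := by
  ext k
  simp [nodeVec]

lemma equiNormSq_const_mul (a : ℂ) (g : ℝ → ℂ) :
    equiNormSq M (fun x => a * g x) = ‖a‖ ^ 2 * equiNormSq M g := by
  simp only [equiNormSq_eq_norm_nodeVec_sq, ← norm_smul, ← mul_pow]
  congr 2
  ext k
  simp only [nodeVec, WithLp.ofLp_smul, Pi.smul_apply, smul_eq_mul]
  ring

end Sampling

lemma bddOn11_indicator_of_finite {s : Set ℝ} (hs : s.Finite) (g : ℝ → ℂ) :
    BddOn11 (s.indicator g) := by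
  obtain ⟨B, hB⟩ := (hs.image fun x => ‖g x‖).bddAbove
  refine ⟨max B 0, fun x _ => ?_⟩
  by_cases hx : x ∈ s
  · rw [Set.indicator_of_mem hx]
    exact (hB ⟨x, hx, rfl⟩).trans (le_max_left _ _)
  · rw [Set.indicator_of_notMem hx, norm_zero]
    exact le_max_right _ _

/-- The truncated-SVD extension `H_ε f`. -/
noncomputable def tsvdExt {K : ℕ} (M : ℕ) (Φ : Fin K → ℝ → ℂ) (σ : Fin K → ℝ) (ε : ℝ)
    (f : ℝ → ℂ) : ℝ → ℂ :=
  fun x => ∑ j ∈ Finset.univ.filter (fun j => ε < σ j),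
    ((((σ j) ^ 2 : ℝ) : ℂ))⁻¹ * equiInner M f (Φ j) * Φ j x

lemma tsvdExt_eq_sum_ite {K : ℕ} (M : ℕ) (Φ : Fin K → ℝ → ℂ) (σ : Fin K → ℝ) (ε : ℝ)
    (f : ℝ → ℂ) :
    tsvdExt M Φ σ ε f = fun x => ∑ j,
      (if ε < σ j then ((((σ j) ^ 2 : ℝ) : ℂ))⁻¹ * equiInner M f (Φ j) else 0) * Φ j x := by
  funext x
  simp only [tsvdExt, Finset.sum_filter, ite_mul, zero_mul]

section TruncatedSVD

variable {M K : ℕ} {Φ : Fin K → ℝ → ℂ} {σ : Fin K → ℝ}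
  (horthM : ∀ j k, equiInner M (Φ j) (Φ k) = if j = k then (((σ j) ^ 2 : ℝ) : ℂ) else 0)
include horthM

lemma inner_nodeVec_eq_ite (j k : Fin K) :
    ⟪nodeVec M (Φ j), nodeVec M (Φ k)⟫_ℂ = if j = k then (((σ j) ^ 2 : ℝ) : ℂ) else 0 := by
  rw [← equiInner_eq_inner_nodeVec, horthM]
  split_ifs <;> simp_all

lemma orthonormal_inv_smul_nodeVec (hσ : ∀ j, σ j ≠ 0) :
    Orthonormal ℂ fun j => ((σ j)⁻¹ : ℂ) • nodeVec M (Φ j) := by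
  rw [orthonormal_iff_ite]
  intro j k
  rw [inner_smul_left, inner_smul_right, inner_nodeVec_eq_ite horthM]
  split_ifs with h
  · subst h
    have : (σ j : ℂ) ≠ 0 := Complex.ofReal_ne_zero.2 (hσ j)
    rw [map_inv₀, Complex.conj_ofReal]
    push_cast
    field_simp
  · simp

lemma equiInner_sum_mul_left (c : Fin K → ℂ) (j : Fin K) :
    equiInner M (fun x => ∑ k, c k * Φ k x) (Φ j) = c j * (((σ j) ^ 2 : ℝ) : ℂ) := by
  rw [equiInner_eq_inner_nodeVec, nodeVec_sum, inner_sum]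
  simp [inner_smul_right, inner_nodeVec_eq_ite horthM]

lemma equiNormSq_sum_mul (hσ : ∀ j, σ j ≠ 0) (c : Fin K → ℂ) :
    equiNormSq M (fun x => ∑ j, c j * Φ j x) = ∑ j, ‖c j‖ ^ 2 * σ j ^ 2 := by
  have hsmul : ∀ j, c j • nodeVec M (Φ j) = (c j * σ j) • (((σ j)⁻¹ : ℂ) • nodeVec M (Φ j)) :=
    fun j => by
      rw [smul_smul, mul_assoc, mul_inv_cancel₀ (Complex.ofReal_ne_zero.2 (hσ j)), mul_one]
  rw [equiNormSq_eq_norm_nodeVec_sq, nodeVec_sum, Finset.sum_congr rfl fun j _ => hsmul j,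
    (orthonormal_inv_smul_nodeVec horthM hσ).norm_sum_smul_sq]
  simp [mul_pow]

lemma equiNormSq_sum_mul_pos (hσ : ∀ j, σ j ≠ 0) {c : Fin K → ℂ} (hc : c ≠ 0) :
    0 < equiNormSq M (fun x => ∑ j, c j * Φ j x) := by
  obtain ⟨j, hj⟩ := Function.ne_iff.1 hc
  rw [equiNormSq_sum_mul horthM hσ]
  exact Finset.sum_pos' (fun _ _ => by positivity)
    ⟨j, Finset.mem_univ j, mul_pos (pow_pos (norm_pos_iff.2 hj) 2) (sq_pos_of_ne_zero (hσ j))⟩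

variable {ε : ℝ}

lemma equiNormSq_tsvdExt_le (hσ : ∀ j, σ j ≠ 0) (f : ℝ → ℂ) :
    equiNormSq M (tsvdExt M Φ σ ε f) ≤ equiNormSq M f := by
  have hterm : ∀ j, (((((σ j) ^ 2 : ℝ) : ℂ))⁻¹ * equiInner M f (Φ j)) • nodeVec M (Φ j)
      = ⟪((σ j)⁻¹ : ℂ) • nodeVec M (Φ j), nodeVec M f⟫_ℂ • (((σ j)⁻¹ : ℂ) • nodeVec M (Φ j)) := by
    intro j
    rw [inner_smul_left, map_inv₀, Complex.conj_ofReal, ← equiInner_eq_inner_nodeVec, smul_smul]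
    push_cast
    ring_nf
  unfold tsvdExt
  rw [equiNormSq_eq_norm_nodeVec_sq, equiNormSq_eq_norm_nodeVec_sq, nodeVec_sum,
    Finset.sum_congr rfl fun j _ => hterm j]
  exact (orthonormal_inv_smul_nodeVec horthM hσ).norm_sum_inner_smul_le _ _

lemma tsvdExt_eq_of_nodeVec_eq (hσ : ∀ j, σ j ≠ 0) {c : Fin K → ℂ}
    (hc : ∀ j, σ j ≤ ε → c j = 0) {f : ℝ → ℂ}
    (hf : nodeVec M f = nodeVec M (fun x => ∑ j, c j * Φ j x)) :
    tsvdExt M Φ σ ε f = fun x => ∑ j, c j * Φ j x := by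
  funext x
  have hcoeff : ∀ j, ((((σ j) ^ 2 : ℝ) : ℂ))⁻¹ * equiInner M f (Φ j) = c j := by
    intro j
    rw [equiInner_eq_inner_nodeVec, hf, ← equiInner_eq_inner_nodeVec,
      equiInner_sum_mul_left horthM, mul_comm (c j), inv_mul_cancel_left₀]
    exact_mod_cast pow_ne_zero 2 (hσ j)
  simp only [tsvdExt, hcoeff]
  refine Finset.sum_filter_of_ne fun j _ hj => ?_
  by_contra hle
  exact left_ne_zero_of_mul hj (hc j (not_lt.1 hle))

lemma sqrt_integral_le_mul_sqrt_equiNormSq (hσ : ∀ j, σ j ≠ 0) {C₁ : ℝ}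
    (hC₁ : ∀ c : Fin K → ℂ, (∀ j, σ j ≤ ε → c j = 0) → c ≠ 0 →
      √(∫ x in Set.Ioo (-1 : ℝ) 1, ‖∑ j, c j * Φ j x‖ ^ 2) /
        √(equiNormSq M (fun x => ∑ j, c j * Φ j x)) ≤ C₁)
    (c : Fin K → ℂ) (hc : ∀ j, σ j ≤ ε → c j = 0) :
    √(∫ x in Set.Ioo (-1 : ℝ) 1, ‖∑ j, c j * Φ j x‖ ^ 2)
      ≤ C₁ * √(equiNormSq M (fun x => ∑ j, c j * Φ j x)) := by
  rcases eq_or_ne c 0 with rfl | hc0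
  · simp [equiNormSq]
  exact (div_le_iff₀ (Real.sqrt_pos.2 (equiNormSq_sum_mul_pos horthM hσ hc0))).1 (hC₁ c hc hc0)

/-- The witness is `φ / ‖φ‖_M`, cut off away from the nodes to make it bounded. -/
lemma exists_bddOn11_sqrt_integral_tsvdExt_eq (hσ : ∀ j, σ j ≠ 0) {c : Fin K → ℂ}
    (hc : ∀ j, σ j ≤ ε → c j = 0) (hc0 : c ≠ 0) :
    ∃ f : ℝ → ℂ, BddOn11 f ∧ equiNormSq M f = 1 ∧
      √(∫ x in Set.Ioo (-1 : ℝ) 1, ‖tsvdExt M Φ σ ε f x‖ ^ 2)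
        = √(∫ x in Set.Ioo (-1 : ℝ) 1, ‖∑ j, c j * Φ j x‖ ^ 2) /
          √(equiNormSq M (fun x => ∑ j, c j * Φ j x)) := by
  set φ : ℝ → ℂ := fun x => ∑ j, c j * Φ j x
  have hφ := equiNormSq_sum_mul_pos horthM hσ hc0
  set t : ℝ := (√(equiNormSq M φ))⁻¹
  have ht : 0 ≤ t := by positivity
  set g : ℝ → ℂ := fun x => ∑ j, (t * c j) * Φ j x
  have hg : g = fun x => t * φ x := by
    funext x
    simp only [g, φ, Finset.mul_sum, mul_assoc]
  have hf := nodeVec_indicator_range_equiNode M g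
  refine ⟨_, bddOn11_indicator_of_finite (Set.finite_range (equiNode M)) g, ?_, ?_⟩
  · rw [equiNormSq_eq_norm_nodeVec_sq, hf, ← equiNormSq_eq_norm_nodeVec_sq, hg,
      equiNormSq_const_mul, Complex.norm_real, Real.norm_of_nonneg ht, inv_pow,
      Real.sq_sqrt hφ.le, inv_mul_cancel₀ hφ.ne']
  · rw [tsvdExt_eq_of_nodeVec_eq horthM hσ (fun j hj => by simp [hc j hj]) hf]
    change √(∫ x in Set.Ioo (-1 : ℝ) 1, ‖g x‖ ^ 2) = _
    simp only [hg, norm_mul, Complex.norm_real, Real.norm_of_nonneg ht, mul_pow]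
    rw [integral_const_mul, Real.sqrt_mul (by positivity), Real.sqrt_sq ht, div_eq_inv_mul]

end TruncatedSVD

theorem stmt_17_general (M : ℕ)
    (K : ℕ) (Φ : Fin K → ℝ → ℂ) (σ : Fin K → ℝ) (hσ : ∀ j, 0 < σ j)
    (horthM : ∀ j k, equiInner M (Φ j) (Φ k) = if j = k then (((σ j) ^ 2 : ℝ) : ℂ) else 0)
    (ε : ℝ) (C₁ : ℝ)
    (hC₁ : IsLUB { r : ℝ | ∃ c : Fin K → ℂ, (∀ j, σ j ≤ ε → c j = 0) ∧ c ≠ 0 ∧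
        r = Real.sqrt (∫ x in Set.Ioo (-1 : ℝ) 1, ‖∑ j, c j * Φ j x‖ ^ 2) /
            Real.sqrt (equiNormSq M (fun x => ∑ j, c j * Φ j x)) } C₁) :
    IsLUB { r : ℝ | ∃ f : ℝ → ℂ, BddOn11 f ∧ equiNormSq M f = 1 ∧
        r = Real.sqrt (∫ x in Set.Ioo (-1 : ℝ) 1,
          ‖∑ j ∈ Finset.univ.filter (fun j => ε < σ j),
            ((((σ j) ^ 2 : ℝ) : ℂ))⁻¹ * equiInner M f (Φ j) * Φ j x‖ ^ 2) } C₁ := by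
  have hσ₀ : ∀ j, σ j ≠ 0 := fun j => (hσ j).ne'
  have hC₁_nonneg : 0 ≤ C₁ := by
    obtain ⟨r, hr⟩ := hC₁.nonempty
    have hr_nonneg : 0 ≤ r := by
      obtain ⟨c, -, -, rfl⟩ := hr
      positivity
    exact hr_nonneg.trans (hC₁.1 hr)
  refine ⟨?_, fun b hb => hC₁.2 ?_⟩
  · rintro _ ⟨f, -, hf, rfl⟩
    change √(∫ x in Set.Ioo (-1 : ℝ) 1, ‖tsvdExt M Φ σ ε f x‖ ^ 2) ≤ C₁
    calc _ ≤ C₁ * √(equiNormSq M (tsvdExt M Φ σ ε f)) := by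
          rw [tsvdExt_eq_sum_ite]
          exact sqrt_integral_le_mul_sqrt_equiNormSq horthM hσ₀
            (fun c hc hc0 => hC₁.1 ⟨c, hc, hc0, rfl⟩) _ fun j hj => if_neg (not_lt.2 hj)
      _ ≤ C₁ * √(equiNormSq M f) := by
          gcongr
          exact equiNormSq_tsvdExt_le horthM hσ₀ f
      _ = C₁ := by rw [hf, Real.sqrt_one, mul_one]
  · rintro _ ⟨c, hc, hc0, rfl⟩
    obtain ⟨f, hf_bdd, hf, hHf⟩ := exists_bddOn11_sqrt_integral_tsvdExt_eq horthM hσ₀ hc hc0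
    exact hHf ▸ hb ⟨f, hf_bdd, hf, rfl⟩

/-- The condition number of the truncated-SVD equispaced Fourier extension
`H_ε(f) = Σ_{σ_j > ε} σ_j^{-2} (f,Φ_j)_M Φ_j` equals
`C₁ = sup{‖φ‖/‖φ‖_M : 0 ≠ φ ∈ span{Φ_j : σ_j > ε}}`:
`sup{‖H_ε(f)‖ : f bounded on [-1,1], ‖f‖_M = 1} = C₁`. -/
theorem stmt_17 (T : ℝ) (hT : 1 < T) (N M : ℕ) (hN : 1 ≤ N) (hNM : N ≤ M)
    (K : ℕ) (Φ : Fin K → ℝ → ℂ) (σ : Fin K → ℝ) (hσ : ∀ j, 0 < σ j)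
    (horthT : ∀ j k, (∫ x in Set.Ioo (-T) T, Φ j x * (starRingEnd ℂ) (Φ k x))
        = if j = k then 1 else 0)
    (horthM : ∀ j k, equiInner M (Φ j) (Φ k) = if j = k then (((σ j) ^ 2 : ℝ) : ℂ) else 0)
    (ε : ℝ) (hε : 0 < ε) (hne : ∃ j, ε < σ j) (C₁ : ℝ)
    (hC₁ : IsLUB { r : ℝ | ∃ c : Fin K → ℂ, (∀ j, σ j ≤ ε → c j = 0) ∧ c ≠ 0 ∧
        r = Real.sqrt (∫ x in Set.Ioo (-1 : ℝ) 1, ‖∑ j, c j * Φ j x‖ ^ 2) /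
            Real.sqrt (equiNormSq M (fun x => ∑ j, c j * Φ j x)) } C₁) :
    IsLUB { r : ℝ | ∃ f : ℝ → ℂ, BddOn11 f ∧ equiNormSq M f = 1 ∧
        r = Real.sqrt (∫ x in Set.Ioo (-1 : ℝ) 1,
          ‖∑ j ∈ Finset.univ.filter (fun j => ε < σ j),
            ((((σ j) ^ 2 : ℝ) : ℂ))⁻¹ * equiInner M f (Φ j) * Φ j x‖ ^ 2) } C₁ :=
  stmt_17_general M K Φ σ hσ horthM ε C₁ hC₁
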